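/- arXiv:2506.07595 — 9 statements merged into one kernel-verified Lean document; each statement's English description precedes it below -/
import Mathlib

section
/- Let T be a positive integer and for each t ∈ [T] let d_t ≥ 0 be a delay with t + d_t ≤ T. Define m_t = {τ ∈ [t-1] : τ + d_τ ≥ t} (the missing observations at time t) and σ_max = max_{t ∈ [T]} |m_t|. Then for every subset S ⊆ [T], σ_max ≤ 2√2 (|S| + √(∑_{τ ∈ [T] \ S} d_τ)). In particular, σ_max ≤ 2√2 · √(∑_{t=1}^T d_t). -/
/-!
Fix a round `t` and split its missing observations into those in `S` and the rest `A`.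
The rounds `τ ∈ A` have pairwise distinct gaps `t - τ ≥ 1`, each bounded by `d τ`, so
`|A|(|A| + 1)/2 ≤ ∑_{τ ∈ A} d τ ≤ ∑_{τ ∉ S} d τ`. Hence `|m_t| ≤ |S| + √(2 ∑_{τ ∉ S} d τ)`,
and `S = ∅` gives the second inequality.
-/

open Finset

theorem Finset.card_mul_card_add_one_le_two_mul_sum (B : Finset ℕ) (hB : ∀ b ∈ B, 1 ≤ b) :
    #B * (#B + 1) ≤ 2 * ∑ b ∈ B, b := by
  induction B using Finset.induction_on_max with
  | empty => simp
  | insert a s hlt ih =>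
    have ha : a ∉ s := fun h => lt_irrefl a (hlt a h)
    have hs_card : #s + 1 ≤ a := by
      have := card_le_card fun x hx => mem_Ico.2 ⟨hB x (mem_insert_of_mem hx), hlt x hx⟩
      rw [Nat.card_Ico] at this
      have := hB a (mem_insert_self a s)
      omega
    have ih' := ih fun b hb => hB b (mem_insert_of_mem hb)
    rw [card_insert_of_notMem ha, sum_insert ha]
    nlinarith

theorem card_mul_card_add_one_le_two_mul_sum_delays (d : ℕ → ℕ) (t : ℕ) (A : Finset ℕ)
    (hA : ∀ τ ∈ A, τ < t ∧ t ≤ τ + d τ) :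
    #A * (#A + 1) ≤ 2 * ∑ τ ∈ A, d τ := by
  have hinj : Set.InjOn (fun τ => t - τ) A := by
    intro a ha b hb hab
    have := hA a ha
    have := hA b hb
    simp only at hab
    omega
  have hgaps := (A.image fun τ => t - τ).card_mul_card_add_one_le_two_mul_sum (by
    simp only [mem_image, forall_exists_index, and_imp]
    rintro _ τ hτ rfl
    have := hA τ hτ
    omega)
  rw [card_image_of_injOn hinj, sum_image hinj] at hgaps
  have hgap_le : ∑ τ ∈ A, (t - τ) ≤ ∑ τ ∈ A, d τ :=
    sum_le_sum fun τ hτ => by have := hA τ hτ; omega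
  omega

theorem card_le_card_add_sqrt_two_mul_sum_sdiff (d : ℕ → ℕ) (t : ℕ) (M S U : Finset ℕ)
    (hM : ∀ τ ∈ M, τ < t ∧ t ≤ τ + d τ) (hMU : M ⊆ U) :
    (#M : ℝ) ≤ #S + √(2 * ∑ τ ∈ U \ S, (d τ : ℝ)) := by
  have hA_sq : #(M \ S) ^ 2 ≤ 2 * ∑ τ ∈ U \ S, d τ := by
    have := card_mul_card_add_one_le_two_mul_sum_delays d t (M \ S)
      fun τ hτ => hM τ (mem_sdiff.1 hτ).1
    have := sum_le_sum_of_subset (f := d) (sdiff_subset_sdiff hMU (le_refl S))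
    nlinarith
  have hA_le : (#(M \ S) : ℝ) ≤ √(2 * ∑ τ ∈ U \ S, (d τ : ℝ)) := by
    rw [Real.le_sqrt (by positivity) (by positivity)]
    exact_mod_cast hA_sq
  have h_split : #M ≤ #(M \ S) + #S := card_le_card_sdiff_add_card
  calc (#M : ℝ) ≤ #(M \ S) + #S := by exact_mod_cast h_split
    _ ≤ #S + √(2 * ∑ τ ∈ U \ S, (d τ : ℝ)) := by linarith

theorem add_sqrt_two_mul_le_two_mul_sqrt_two_mul_add_sqrt {s D : ℝ} (hs : 0 ≤ s) :
    s + √(2 * D) ≤ 2 * √2 * (s + √D) := by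
  have h_sqrt2 : 1 ≤ √2 := Real.one_le_sqrt.2 (by norm_num)
  rw [Real.sqrt_mul zero_le_two]
  nlinarith [Real.sqrt_nonneg D]

theorem stmt0_general (T : ℕ) (d : ℕ → ℕ)
    (m : ℕ → Finset ℕ)
    (hm : ∀ t, m t = (Finset.Ico 1 t).filter (fun τ => t ≤ τ + d τ)) :
    (∀ S ⊆ Finset.Icc 1 T,
      (((Finset.Icc 1 T).sup (fun t => (m t).card) : ℕ) : ℝ) ≤
        2 * Real.sqrt 2 *
          ((S.card : ℝ) + Real.sqrt (∑ τ ∈ Finset.Icc 1 T \ S, (d τ : ℝ)))) ∧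
    (((Finset.Icc 1 T).sup (fun t => (m t).card) : ℕ) : ℝ) ≤
      2 * Real.sqrt 2 * Real.sqrt (∑ t ∈ Finset.Icc 1 T, (d t : ℝ)) := by
  have main (S : Finset ℕ) : (((Icc 1 T).sup (fun t => #(m t)) : ℕ) : ℝ) ≤
      2 * √2 * (#S + √(∑ τ ∈ Icc 1 T \ S, (d τ : ℝ))) := by
    have hX : 0 ≤ 2 * √2 * (#S + √(∑ τ ∈ Icc 1 T \ S, (d τ : ℝ))) := by positivity
    rw [← Nat.le_floor_iff hX]
    refine Finset.sup_le fun t ht => (Nat.le_floor_iff hX).2 ?_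
    have h_missing : ∀ τ ∈ m t, τ < t ∧ t ≤ τ + d τ := fun τ hτ => by
      simp only [hm, mem_filter, mem_Ico] at hτ
      omega
    have h_sub : m t ⊆ Icc 1 T := fun τ hτ => by
      simp only [hm, mem_filter, mem_Ico] at hτ
      simp only [mem_Icc] at ht ⊢
      omega
    exact (card_le_card_add_sqrt_two_mul_sum_sdiff d t (m t) S _ h_missing h_sub).trans
      (add_sqrt_two_mul_le_two_mul_sqrt_two_mul_add_sqrt (by positivity))
  exact ⟨fun S _ => main S, by simpa using main ∅⟩

theorem stmt0 (T : ℕ) (hT : 0 < T) (d : ℕ → ℕ)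
    (hd : ∀ t ∈ Finset.Icc 1 T, t + d t ≤ T)
    (m : ℕ → Finset ℕ)
    (hm : ∀ t, m t = (Finset.Ico 1 t).filter (fun τ => t ≤ τ + d τ)) :
    (∀ S ⊆ Finset.Icc 1 T,
      (((Finset.Icc 1 T).sup (fun t => (m t).card) : ℕ) : ℝ) ≤
        2 * Real.sqrt 2 *
          ((S.card : ℝ) + Real.sqrt (∑ τ ∈ Finset.Icc 1 T \ S, (d τ : ℝ)))) ∧
    (((Finset.Icc 1 T).sup (fun t => (m t).card) : ℕ) : ℝ) ≤
      2 * Real.sqrt 2 * Real.sqrt (∑ t ∈ Finset.Icc 1 T, (d t : ℝ)) :=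
  stmt0_general T d m hm
end

section
/- Let T be a positive integer and for each t ∈ [T] let d_t ∈ ℕ. Define m_t = {τ ∈ [t-1] : τ + d_τ ≥ t}, σ_max = max_t |m_t|, and for S ⊆ [T] define σ_max^S = max_{τ ∈ [T]} |m_τ ∩ S|. Then σ_max = min_{S ⊆ [T]} (|S| + σ_max^{[T]\S}). -/
namespace Finset

variable {ι α : Type*} [DecidableEq α]

lemma inter_sdiff_eq_sdiff_of_subset {s U : Finset α} (h : s ⊆ U) (S : Finset α) :
    s ∩ (U \ S) = s \ S := by
  rw [← inter_sdiff_assoc, inter_eq_left.mpr h]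

lemma card_le_card_add_card_inter_sdiff {s U : Finset α} (h : s ⊆ U) (S : Finset α) :
    #s ≤ #S + #(s ∩ (U \ S)) := by
  rw [inter_sdiff_eq_sdiff_of_subset h, ← card_inter_add_card_sdiff s S]
  exact Nat.add_le_add_right (card_le_card inter_subset_right) _

/-- Removing a set `S` from every member of a family of subsets of `U` lowers the largest
member by at most `#S`, and `S = ∅` removes nothing. -/
theorem sup_card_eq_inf'_card_add_sup_card_inter_sdiff (I : Finset ι) (U : Finset α)
    (m : ι → Finset α) (hm : ∀ i ∈ I, m i ⊆ U) :
    I.sup (fun i => #(m i)) =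
      U.powerset.inf' (powerset_nonempty _) (fun S => #S + I.sup fun i => #(m i ∩ (U \ S))) := by
  apply le_antisymm
  · refine le_inf' _ _ fun S _ => Finset.sup_le fun i hi => ?_
    exact (card_le_card_add_card_inter_sdiff (hm i hi) S).trans
      (Nat.add_le_add_left (le_sup (f := fun i => #(m i ∩ (U \ S))) hi) _)
  · refine (inf'_le _ (empty_mem_powerset U)).trans (le_of_eq ?_)
    rw [card_empty, zero_add, sdiff_empty]
    exact sup_congr rfl fun i hi => by rw [inter_eq_left.mpr (hm i hi)]

end Finset

theorem stmt2_general (T : ℕ) (d : ℕ → ℕ)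
    (m : ℕ → Finset ℕ)
    (hm : ∀ t, m t = (Finset.Ico 1 t).filter (fun τ => t ≤ τ + d τ)) :
    (Finset.Icc 1 T).sup (fun t => (m t).card) =
      (Finset.Icc 1 T).powerset.inf' (Finset.powerset_nonempty _)
        (fun S => S.card +
          (Finset.Icc 1 T).sup (fun τ => ((m τ) ∩ (Finset.Icc 1 T \ S)).card)) := by
  refine Finset.sup_card_eq_inf'_card_add_sup_card_inter_sdiff _ _ m fun t ht => ?_
  rw [hm t]
  exact (Finset.filter_subset _ _).trans
    (Finset.Ico_subset_Icc_self.trans (Finset.Icc_subset_Icc_right (Finset.mem_Icc.mp ht).2))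

theorem stmt2 (T : ℕ) (hT : 0 < T) (d : ℕ → ℕ)
    (m : ℕ → Finset ℕ)
    (hm : ∀ t, m t = (Finset.Ico 1 t).filter (fun τ => t ≤ τ + d τ)) :
    (Finset.Icc 1 T).sup (fun t => (m t).card) =
      (Finset.Icc 1 T).powerset.inf' (Finset.powerset_nonempty _)
        (fun S => S.card +
          (Finset.Icc 1 T).sup (fun τ => ((m τ) ∩ (Finset.Icc 1 T \ S)).card)) :=
  stmt2_general T d m hm
end

section
/- Let X ⊆ ℝⁿ be a nonempty closed convex set, A ∈ ℝ^{n×n} a positive definite symmetric matrix, b ∈ ℝⁿ, c ∈ ℝ, and ψ(x) = xᵀAx + bᵀx + c. For w₁, w₂ ∈ ℝⁿ, suppose z₁ minimizes x ↦ ⟨w₁,x⟩ + ψ(x) over X and z₂ minimizes x ↦ ⟨w₂,x⟩ + ψ(x) over X. Then ‖z₁ - z₂‖_A ≤ (1/2)‖w₁ - w₂‖_{A⁻¹}, where ‖v‖_A = √(vᵀAv). -/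
open Matrix Filter Topology

/-!
Write `f_w x = w ⬝ᵥ x + x ⬝ᵥ A *ᵥ x`, the objective up to absorbing `b` into `w` and dropping `c`.
Since `f_w` is quadratic along segments, the first-order optimality condition at a minimizer `z`
over the convex set `X` reads `0 ≤ (w + 2 A z) ⬝ᵥ (y - z)` for all `y ∈ X`. Adding the conditions
at `z₁` and `z₂` gives strong monotonicity, `2 ‖z₁ - z₂‖²_A ≤ (w₂ - w₁) ⬝ᵥ (z₁ - z₂)`, and the
right-hand side is at most `‖w₁ - w₂‖_{A⁻¹} ‖z₁ - z₂‖_A` by Cauchy–Schwarz for the form of `A`,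
tested against `A⁻¹ (w₁ - w₂)`.
-/

lemma nonneg_of_forall_mul_add_sq_mul_nonneg {g C : ℝ}
    (h : ∀ t ∈ Set.Ioc (0 : ℝ) 1, 0 ≤ t * g + t ^ 2 * C) : 0 ≤ g := by
  have hlim : Tendsto (fun t : ℝ => g + t * C) (𝓝[>] 0) (𝓝 g) := by
    have : Continuous fun t : ℝ => g + t * C := by fun_prop
    simpa using (this.tendsto 0).mono_left nhdsWithin_le_nhds
  refine ge_of_tendsto hlim ?_
  filter_upwards [Ioc_mem_nhdsGT one_pos] with t ht
  exact nonneg_of_mul_nonneg_right (by linear_combination h t ht) ht.1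

lemma le_half_mul_of_two_mul_sq_le_mul {a q : ℝ} (hq : 0 ≤ q)
    (h : 2 * a ^ 2 ≤ q * a) : a ≤ 1 / 2 * q := by
  nlinarith

section Quadratic

variable {ι : Type*} [Fintype ι]

lemma Matrix.PosSemidef.dotProduct_mulVec_self_nonneg {A : Matrix ι ι ℝ} (hA : A.PosSemidef)
    (x : ι → ℝ) : 0 ≤ x ⬝ᵥ A *ᵥ x := by
  simpa only [star_trivial] using hA.dotProduct_mulVec_nonneg x

lemma Matrix.add_transpose_mulVec_dotProduct_self (A : Matrix ι ι ℝ) (x : ι → ℝ) :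
    (A + Aᵀ) *ᵥ x ⬝ᵥ x = 2 * (x ⬝ᵥ A *ᵥ x) := by
  rw [add_mulVec, add_dotProduct, mulVec_transpose, ← dotProduct_mulVec, dotProduct_comm]
  ring

lemma Matrix.dotProduct_mulVec_add_smul (A : Matrix ι ι ℝ) (z e : ι → ℝ) (t : ℝ) :
    (z + t • e) ⬝ᵥ A *ᵥ (z + t • e) =
      z ⬝ᵥ A *ᵥ z + t * ((A + Aᵀ) *ᵥ z ⬝ᵥ e) + t ^ 2 * (e ⬝ᵥ A *ᵥ e) := by
  have hze : z ⬝ᵥ A *ᵥ e = Aᵀ *ᵥ z ⬝ᵥ e := by rw [mulVec_transpose, dotProduct_mulVec]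
  have hez : e ⬝ᵥ A *ᵥ z = A *ᵥ z ⬝ᵥ e := dotProduct_comm _ _
  simp only [mulVec_add, mulVec_smul, dotProduct_add, add_dotProduct, dotProduct_smul,
    smul_dotProduct, smul_eq_mul, add_mulVec, hze, hez]
  ring

theorem Convex.add_transpose_mulVec_dotProduct_sub_nonneg_of_isMinOn {X : Set (ι → ℝ)}
    (hX : Convex ℝ X) {A : Matrix ι ι ℝ} {w z y : ι → ℝ}
    (hmin : IsMinOn (fun x => w ⬝ᵥ x + x ⬝ᵥ A *ᵥ x) X z) (hz : z ∈ X) (hy : y ∈ X) :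
    0 ≤ (w + (A + Aᵀ) *ᵥ z) ⬝ᵥ (y - z) := by
  refine nonneg_of_forall_mul_add_sq_mul_nonneg (C := (y - z) ⬝ᵥ A *ᵥ (y - z)) fun t ht => ?_
  have hle := isMinOn_iff.mp hmin _ (hX.add_smul_sub_mem hz hy (Set.Ioc_subset_Icc_self ht))
  beta_reduce at hle
  rw [dotProduct_mulVec_add_smul, dotProduct_add, dotProduct_smul, smul_eq_mul] at hle
  rw [add_dotProduct]
  linarith

theorem Convex.two_mul_dotProduct_mulVec_sub_le_of_isMinOn {X : Set (ι → ℝ)}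
    (hX : Convex ℝ X) {A : Matrix ι ι ℝ} {w₁ w₂ z₁ z₂ : ι → ℝ}
    (h₁ : IsMinOn (fun x => w₁ ⬝ᵥ x + x ⬝ᵥ A *ᵥ x) X z₁) (hz₁ : z₁ ∈ X)
    (h₂ : IsMinOn (fun x => w₂ ⬝ᵥ x + x ⬝ᵥ A *ᵥ x) X z₂) (hz₂ : z₂ ∈ X) :
    2 * ((z₁ - z₂) ⬝ᵥ A *ᵥ (z₁ - z₂)) ≤ (w₂ - w₁) ⬝ᵥ (z₁ - z₂) := by
  have g₁ := hX.add_transpose_mulVec_dotProduct_sub_nonneg_of_isMinOn h₁ hz₁ hz₂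
  have g₂ := hX.add_transpose_mulVec_dotProduct_sub_nonneg_of_isMinOn h₂ hz₂ hz₁
  rw [← neg_sub, dotProduct_neg] at g₁
  have hsum : (w₂ + (A + Aᵀ) *ᵥ z₂) ⬝ᵥ (z₁ - z₂) - (w₁ + (A + Aᵀ) *ᵥ z₁) ⬝ᵥ (z₁ - z₂) =
      (w₂ - w₁) ⬝ᵥ (z₁ - z₂) - 2 * ((z₁ - z₂) ⬝ᵥ A *ᵥ (z₁ - z₂)) := by
    rw [← add_transpose_mulVec_dotProduct_self, ← sub_dotProduct, ← sub_dotProduct, mulVec_sub]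
    congr 1
    abel
  linarith

variable [DecidableEq ι]

theorem Matrix.PosDef.abs_dotProduct_le_sqrt_mul_sqrt {A : Matrix ι ι ℝ} (hA : A.PosDef)
    (u x : ι → ℝ) : |u ⬝ᵥ x| ≤ √(u ⬝ᵥ A⁻¹ *ᵥ u) * √(x ⬝ᵥ A *ᵥ x) := by
  obtain ⟨v, hv⟩ : ∃ v, v = A⁻¹ *ᵥ u := ⟨_, rfl⟩
  have hAv : A *ᵥ v = u := by
    rw [hv, mulVec_mulVec, mul_nonsing_inv A hA.det_pos.ne'.isUnit, one_mulVec]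
  have hAt : Aᵀ = A := by simpa using hA.isHermitian.eq
  have hvx : v ⬝ᵥ A *ᵥ x = u ⬝ᵥ x := by rw [dotProduct_mulVec, ← mulVec_transpose, hAt, hAv]
  have hxv : x ⬝ᵥ A *ᵥ v = u ⬝ᵥ x := by rw [hAv, dotProduct_comm]
  have hvv : v ⬝ᵥ A *ᵥ v = u ⬝ᵥ A⁻¹ *ᵥ u := by rw [hAv, dotProduct_comm, hv]
  have hcs := (toBilin' A).apply_mul_apply_le_of_forall_zero_le
    (fun y => (toBilin'_apply' A y y).symm ▸ hA.posSemidef.dotProduct_mulVec_self_nonneg y) v x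
  simp only [toBilin'_apply', hvx, hxv, hvv] at hcs
  rw [← Real.sqrt_mul' _ (hA.posSemidef.dotProduct_mulVec_self_nonneg x)]
  exact Real.abs_le_sqrt (by simpa [sq] using hcs)

end Quadratic

theorem stmt5_general {n : ℕ} (X : Set (Fin n → ℝ))
    (hXconv : Convex ℝ X)
    (A : Matrix (Fin n) (Fin n) ℝ) (hA : A.PosDef)
    (b : Fin n → ℝ) (c : ℝ) (w₁ w₂ z₁ z₂ : Fin n → ℝ)
    (ψ : (Fin n → ℝ) → ℝ)
    (hψ : ∀ x, ψ x = x ⬝ᵥ A.mulVec x + b ⬝ᵥ x + c)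
    (hz₁mem : z₁ ∈ X) (hz₁ : ∀ x ∈ X, w₁ ⬝ᵥ z₁ + ψ z₁ ≤ w₁ ⬝ᵥ x + ψ x)
    (hz₂mem : z₂ ∈ X) (hz₂ : ∀ x ∈ X, w₂ ⬝ᵥ z₂ + ψ z₂ ≤ w₂ ⬝ᵥ x + ψ x) :
    Real.sqrt ((z₁ - z₂) ⬝ᵥ A.mulVec (z₁ - z₂)) ≤
      (1 / 2) * Real.sqrt ((w₁ - w₂) ⬝ᵥ A⁻¹.mulVec (w₁ - w₂)) := by
  have hmin {w z : Fin n → ℝ} (hz : ∀ x ∈ X, w ⬝ᵥ z + ψ z ≤ w ⬝ᵥ x + ψ x) :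
      IsMinOn (fun x => (w + b) ⬝ᵥ x + x ⬝ᵥ A *ᵥ x) X z :=
    isMinOn_iff.mpr fun x hx => by
      have := hz x hx
      simp only [hψ, add_dotProduct] at this ⊢
      linarith
  have hmono := hXconv.two_mul_dotProduct_mulVec_sub_le_of_isMinOn
    (hmin hz₁) hz₁mem (hmin hz₂) hz₂mem
  rw [add_sub_add_right_eq_sub, ← neg_sub w₁ w₂, neg_dotProduct] at hmono
  have hcs := hA.abs_dotProduct_le_sqrt_mul_sqrt (w₁ - w₂) (z₁ - z₂)
  have hP := hA.posSemidef.dotProduct_mulVec_self_nonneg (z₁ - z₂)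
  refine le_half_mul_of_two_mul_sq_le_mul (Real.sqrt_nonneg _) ?_
  rw [Real.sq_sqrt hP]
  linarith [neg_abs_le ((w₁ - w₂) ⬝ᵥ (z₁ - z₂))]

theorem stmt5 {n : ℕ} (X : Set (Fin n → ℝ)) (hXne : X.Nonempty) (hXc : IsClosed X)
    (hXconv : Convex ℝ X)
    (A : Matrix (Fin n) (Fin n) ℝ) (hA : A.PosDef)
    (b : Fin n → ℝ) (c : ℝ) (w₁ w₂ z₁ z₂ : Fin n → ℝ)
    (ψ : (Fin n → ℝ) → ℝ)
    (hψ : ∀ x, ψ x = x ⬝ᵥ A.mulVec x + b ⬝ᵥ x + c)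
    (hz₁mem : z₁ ∈ X) (hz₁ : ∀ x ∈ X, w₁ ⬝ᵥ z₁ + ψ z₁ ≤ w₁ ⬝ᵥ x + ψ x)
    (hz₂mem : z₂ ∈ X) (hz₂ : ∀ x ∈ X, w₂ ⬝ᵥ z₂ + ψ z₂ ≤ w₂ ⬝ᵥ x + ψ x) :
    Real.sqrt ((z₁ - z₂) ⬝ᵥ A.mulVec (z₁ - z₂)) ≤
      (1 / 2) * Real.sqrt ((w₁ - w₂) ⬝ᵥ A⁻¹.mulVec (w₁ - w₂)) :=
  stmt5_general X hXconv A hA b c w₁ w₂ z₁ z₂ ψ hψ hz₁mem hz₁ hz₂mem hz₂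
end

section
/- Let X ⊆ ℝⁿ be a nonempty closed convex set, A₁, A₂ positive semidefinite symmetric matrices, and let ψᵢ(x) = xᵀAᵢx + bᵢᵀx + cᵢ for i = 1,2. Suppose z₁ ∈ argmin_{x∈X}(⟨w₁,x⟩ + ψ₁(x)) and z₂ ∈ argmin_{x∈X}(⟨w₂,x⟩ + ψ₂(x)). Then ‖z₁ - z₂‖²_{A₁} + ‖z₁ - z₂‖²_{A₂} ≤ ⟨w₁ - w₂, z₂ - z₁⟩ + (ψ₁(z₂) - ψ₂(z₂)) - (ψ₁(z₁) - ψ₂(z₁)). -/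
/-!
Along the segment from the minimizer `z` to any `y ∈ X`, the objective is the exact quadratic
`t ↦ f z + t L + t² ‖y - z‖²_A`. Minimality forces the first-order term `L` to be nonnegative,
and evaluating at `t = 1` gives `f y - f z ≥ ‖y - z‖²_A`. Adding this inequality for the two
minimizers, each tested against the other, yields the claim.
-/

open Matrix Filter Topology

section Quadratic

variable {ι R : Type*} [Fintype ι] [CommRing R]

def quadraticFun (A : Matrix ι ι R) (b : ι → R) (c : R) (x : ι → R) : R :=
  x ⬝ᵥ A *ᵥ x + b ⬝ᵥ x + c

theorem quadraticFun_add_smul (A : Matrix ι ι R) (b : ι → R) (c : R) (x d : ι → R) (t : R) :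
    quadraticFun A b c (x + t • d) =
      quadraticFun A b c x + t * (x ⬝ᵥ A *ᵥ d + d ⬝ᵥ A *ᵥ x + b ⬝ᵥ d) + t ^ 2 * (d ⬝ᵥ A *ᵥ d) := by
  simp only [quadraticFun, mulVec_add, mulVec_smul, dotProduct_add, add_dotProduct,
    smul_dotProduct, dotProduct_smul, smul_eq_mul]
  ring

theorem dotProduct_add_quadraticFun (A : Matrix ι ι R) (b : ι → R) (c : R) (w x : ι → R) :
    w ⬝ᵥ x + quadraticFun A b c x = quadraticFun A (w + b) c x := by
  simp only [quadraticFun, add_dotProduct]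
  ring

theorem sub_dotProduct_mulVec_sub_comm (A : Matrix ι ι R) (x y : ι → R) :
    (x - y) ⬝ᵥ A *ᵥ (x - y) = (y - x) ⬝ᵥ A *ᵥ (y - x) := by
  rw [← neg_sub y x, mulVec_neg, neg_dotProduct, dotProduct_neg, neg_neg]

theorem nonneg_of_forall_Ioc_mul_add_sq_mul_nonneg {L Q : ℝ}
    (h : ∀ t ∈ Set.Ioc (0 : ℝ) 1, 0 ≤ t * L + t ^ 2 * Q) : 0 ≤ L := by
  have hlim : Tendsto (fun t : ℝ => L + t * Q) (𝓝[>] 0) (𝓝 L) := by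
    have : Tendsto (fun t : ℝ => L + t * Q) (𝓝 0) (𝓝 (L + 0 * Q)) :=
      tendsto_const_nhds.add (tendsto_id.mul_const Q)
    simpa using this.mono_left nhdsWithin_le_nhds
  refine ge_of_tendsto hlim ?_
  filter_upwards [Ioc_mem_nhdsGT (zero_lt_one' ℝ)] with t ht
  have := h t ht
  nlinarith [ht.1]

theorem quadraticFun_sub_ge_of_isMinOn {X : Set (ι → ℝ)} (hX : Convex ℝ X)
    {A : Matrix ι ι ℝ} {b : ι → ℝ} {c : ℝ} {y z : ι → ℝ} (hz : z ∈ X) (hy : y ∈ X)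
    (hmin : IsMinOn (quadraticFun A b c) X z) :
    (y - z) ⬝ᵥ A *ᵥ (y - z) ≤ quadraticFun A b c y - quadraticFun A b c z := by
  have hL : 0 ≤ z ⬝ᵥ A *ᵥ (y - z) + (y - z) ⬝ᵥ A *ᵥ z + b ⬝ᵥ (y - z) := by
    refine nonneg_of_forall_Ioc_mul_add_sq_mul_nonneg (Q := (y - z) ⬝ᵥ A *ᵥ (y - z))
      fun t ht => ?_
    have := isMinOn_iff.1 hmin _ (hX.add_smul_sub_mem hz hy (Set.Ioc_subset_Icc_self ht))
    rw [quadraticFun_add_smul] at this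
    linarith
  have hy_eq := quadraticFun_add_smul A b c z (y - z) 1
  rw [one_smul, add_sub_cancel] at hy_eq
  linarith

end Quadratic

theorem stmt6_general {n : ℕ} (X : Set (Fin n → ℝ))
    (hXconv : Convex ℝ X)
    (A₁ A₂ : Matrix (Fin n) (Fin n) ℝ)
    (b₁ b₂ : Fin n → ℝ) (c₁ c₂ : ℝ) (w₁ w₂ z₁ z₂ : Fin n → ℝ)
    (ψ₁ ψ₂ : (Fin n → ℝ) → ℝ)
    (hψ₁ : ∀ x, ψ₁ x = x ⬝ᵥ A₁.mulVec x + b₁ ⬝ᵥ x + c₁)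
    (hψ₂ : ∀ x, ψ₂ x = x ⬝ᵥ A₂.mulVec x + b₂ ⬝ᵥ x + c₂)
    (hz₁mem : z₁ ∈ X) (hz₁ : ∀ x ∈ X, w₁ ⬝ᵥ z₁ + ψ₁ z₁ ≤ w₁ ⬝ᵥ x + ψ₁ x)
    (hz₂mem : z₂ ∈ X) (hz₂ : ∀ x ∈ X, w₂ ⬝ᵥ z₂ + ψ₂ z₂ ≤ w₂ ⬝ᵥ x + ψ₂ x) :
    (z₁ - z₂) ⬝ᵥ A₁.mulVec (z₁ - z₂) + (z₁ - z₂) ⬝ᵥ A₂.mulVec (z₁ - z₂) ≤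
      (w₁ - w₂) ⬝ᵥ (z₂ - z₁) + (ψ₁ z₂ - ψ₂ z₂) - (ψ₁ z₁ - ψ₂ z₁) := by
  have hf₁ : ∀ x, w₁ ⬝ᵥ x + ψ₁ x = quadraticFun A₁ (w₁ + b₁) c₁ x := fun x => by
    rw [hψ₁, ← dotProduct_add_quadraticFun]; rfl
  have hf₂ : ∀ x, w₂ ⬝ᵥ x + ψ₂ x = quadraticFun A₂ (w₂ + b₂) c₂ x := fun x => by
    rw [hψ₂, ← dotProduct_add_quadraticFun]; rfl
  have h₁ := quadraticFun_sub_ge_of_isMinOn hXconv hz₁mem hz₂mem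
    (isMinOn_iff.2 fun x hx => by simpa only [hf₁] using hz₁ x hx)
  have h₂ := quadraticFun_sub_ge_of_isMinOn hXconv hz₂mem hz₁mem
    (isMinOn_iff.2 fun x hx => by simpa only [hf₂] using hz₂ x hx)
  simp only [← hf₁, ← hf₂] at h₁ h₂
  rw [sub_dotProduct_mulVec_sub_comm A₁, sub_dotProduct w₁, dotProduct_sub w₁, dotProduct_sub w₂]
  linarith

theorem stmt6 {n : ℕ} (X : Set (Fin n → ℝ)) (hXne : X.Nonempty) (hXc : IsClosed X)
    (hXconv : Convex ℝ X)
    (A₁ A₂ : Matrix (Fin n) (Fin n) ℝ) (hA₁ : A₁.PosSemidef) (hA₂ : A₂.PosSemidef)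
    (b₁ b₂ : Fin n → ℝ) (c₁ c₂ : ℝ) (w₁ w₂ z₁ z₂ : Fin n → ℝ)
    (ψ₁ ψ₂ : (Fin n → ℝ) → ℝ)
    (hψ₁ : ∀ x, ψ₁ x = x ⬝ᵥ A₁.mulVec x + b₁ ⬝ᵥ x + c₁)
    (hψ₂ : ∀ x, ψ₂ x = x ⬝ᵥ A₂.mulVec x + b₂ ⬝ᵥ x + c₂)
    (hz₁mem : z₁ ∈ X) (hz₁ : ∀ x ∈ X, w₁ ⬝ᵥ z₁ + ψ₁ z₁ ≤ w₁ ⬝ᵥ x + ψ₁ x)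
    (hz₂mem : z₂ ∈ X) (hz₂ : ∀ x ∈ X, w₂ ⬝ᵥ z₂ + ψ₂ z₂ ≤ w₂ ⬝ᵥ x + ψ₂ x) :
    (z₁ - z₂) ⬝ᵥ A₁.mulVec (z₁ - z₂) + (z₁ - z₂) ⬝ᵥ A₂.mulVec (z₁ - z₂) ≤
      (w₁ - w₂) ⬝ᵥ (z₂ - z₁) + (ψ₁ z₂ - ψ₂ z₂) - (ψ₁ z₁ - ψ₂ z₁) :=
  stmt6_general X hXconv A₁ A₂ b₁ b₂ c₁ c₂ w₁ w₂ z₁ z₂ ψ₁ ψ₂ hψ₁ hψ₂ hz₁mem hz₁ hz₂mem hz₂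
end

section
/- Let f : X → ℝ be an α-exp-concave differentiable function on a convex set X ⊆ ℝⁿ, with ‖∇f(y)‖₂ ≤ G for all y ∈ X and diameter of X at most D. Set β = (1/2)·min{1/(4GD), α}. Then for all x, y ∈ X, f(x) ≥ f(y) + ⟨∇f(y), x - y⟩ + (β/2)(⟨∇f(y), x - y⟩)². -/
/-!
Concavity of `exp (-α f)` gives the first-order bound
`exp (-α (f x - f y)) ≤ 1 - α ⟪∇f y, x - y⟫`. Raising it to the power `γ / α ≤ 1`, Bernoulli's
inequality gives the same bound for `γ = 2β`, and now `γ |⟪∇f y, x - y⟫| ≤ 1/4` by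
Cauchy–Schwarz. Taking logarithms in `1 - t ≤ exp (-t - t² / 4)` (valid for `t ≥ -1`) finishes.
-/

open RealInnerProductSpace Set

theorem ConcaveOn.le_add_of_hasFDerivAt {E : Type*} [NormedAddCommGroup E] [NormedSpace ℝ E]
    {s : Set E} {h : E → ℝ} {h' : E →L[ℝ] ℝ} {x y : E} (hh : ConcaveOn ℝ s h)
    (hx : x ∈ s) (hy : y ∈ s) (hd : HasFDerivAt h h' y) :
    h x ≤ h y + h' (x - y) := by
  have hline : ConcaveOn ℝ (Icc (0 : ℝ) 1) (h ∘ AffineMap.lineMap y x) :=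
    (hh.comp_affineMap _).subset (fun t ht ↦ hh.1.lineMap_mem hy hx ht) (convex_Icc 0 1)
  have hderiv : HasDerivAt (h ∘ AffineMap.lineMap y x) (h' (x - y)) (0 : ℝ) :=
    hd.comp_hasDerivAt_of_eq 0 AffineMap.hasDerivAt_lineMap (by simp)
  have := hline.slope_le_of_hasDerivAt (by simp) (by simp) zero_lt_one hderiv
  simpa [slope_def_field, add_comm] using this

theorem one_sub_le_exp_neg_sub_sq_div_four {t : ℝ} (ht : -1 ≤ t) :
    1 - t ≤ Real.exp (-t - t ^ 2 / 4) := by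
  rcases le_total t 0 with ht0 | ht0
  · have hs : 0 ≤ -t - t ^ 2 / 4 := by nlinarith
    nlinarith [Real.quadratic_le_exp_of_nonneg hs]
  · have hsq : Real.exp (-t - t ^ 2 / 4) = Real.exp ((-t - t ^ 2 / 4) / 2) ^ 2 := by
      rw [← Real.exp_nat_mul]; ring_nf
    rcases le_total t 1 with ht1 | ht1
    · have hc : 0 ≤ (-t - t ^ 2 / 4) / 2 + 1 := by nlinarith
      have := pow_le_pow_left₀ hc (Real.add_one_le_exp ((-t - t ^ 2 / 4) / 2)) 2
      nlinarith [pow_nonneg ht0 3, pow_nonneg ht0 4]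
    · linarith [Real.exp_pos (-t - t ^ 2 / 4)]

theorem ConcaveOn.exp_neg_mul_sub_le_one_sub_inner {E : Type*} [NormedAddCommGroup E]
    [InnerProductSpace ℝ E] [CompleteSpace E] {s : Set E} {f : E → ℝ} {g x y : E} {α : ℝ}
    (hexp : ConcaveOn ℝ s (fun x ↦ Real.exp (-α * f x))) (hx : x ∈ s) (hy : y ∈ s)
    (hf : HasGradientAt f g y) :
    Real.exp (-α * (f x - f y)) ≤ 1 - α * ⟪g, x - y⟫ := by
  have hd := (hf.hasFDerivAt.const_mul (-α)).exp
  have htangent := hexp.le_add_of_hasFDerivAt hx hy hd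
  simp only [smul_apply, InnerProductSpace.toDual_apply_apply, smul_eq_mul] at htangent
  have hpos := Real.exp_pos (-α * f y)
  rw [show -α * (f x - f y) = -α * f x - -α * f y by ring, Real.exp_sub, div_le_iff₀ hpos]
  linarith

theorem exp_neg_mul_le_one_sub_of_le {α γ Δ z : ℝ} (hα : 0 < α) (hγ : 0 ≤ γ) (hγα : γ ≤ α)
    (h : Real.exp (-α * Δ) ≤ 1 - α * z) :
    Real.exp (-γ * Δ) ≤ 1 - γ * z := by
  have hpow : Real.exp (-γ * Δ) = Real.exp (-α * Δ) ^ (γ / α) := by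
    rw [← Real.exp_mul]; congr 1; field_simp
  have hs : -1 ≤ -(α * z) := by linarith [Real.exp_pos (-α * Δ)]
  calc Real.exp (-γ * Δ) = Real.exp (-α * Δ) ^ (γ / α) := hpow
    _ ≤ (1 + -(α * z)) ^ (γ / α) := by
        rw [← sub_eq_add_neg]; exact Real.rpow_le_rpow (Real.exp_pos _).le h (by positivity)
    _ ≤ 1 + γ / α * -(α * z) :=
        rpow_one_add_le_one_add_mul_self hs (by positivity) ((div_le_one hα).2 hγα)
    _ = 1 - γ * z := by field_simp; ring

theorem add_mul_sq_le_of_exp_neg_mul_le_one_sub {γ Δ z : ℝ} (hγ : 0 < γ) (hz : -1 ≤ γ * z)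
    (h : Real.exp (-γ * Δ) ≤ 1 - γ * z) :
    z + γ / 4 * z ^ 2 ≤ Δ := by
  have := h.trans (one_sub_le_exp_neg_sub_sq_div_four hz)
  rw [Real.exp_le_exp] at this
  nlinarith

theorem le_of_exp_neg_mul_le_one_sub {α Δ z : ℝ} (hα : 0 < α)
    (h : Real.exp (-α * Δ) ≤ 1 - α * z) : z ≤ Δ := by
  have := h.trans (by linarith [Real.add_one_le_exp (-(α * z))] : 1 - α * z ≤ Real.exp (-(α * z)))
  rw [Real.exp_le_exp] at this
  nlinarith

theorem min_one_div_mul_le {c a : ℝ} (hc : 0 ≤ c) : min (1 / (4 * c)) a * c ≤ 1 / 4 := by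
  calc min (1 / (4 * c)) a * c ≤ 1 / (4 * c) * c := by gcongr; exact min_le_left _ _
    _ ≤ 1 / 4 := by
      rcases hc.eq_or_lt with rfl | hc
      · norm_num
      · field_simp; rfl

theorem stmt8_general {n : ℕ} (X : Set (EuclideanSpace ℝ (Fin n)))
    (f : EuclideanSpace ℝ (Fin n) → ℝ)
    (f' : EuclideanSpace ℝ (Fin n) → EuclideanSpace ℝ (Fin n))
    (hdiff : ∀ y ∈ X, HasGradientAt f (f' y) y)
    (α G D : ℝ) (hα : 0 < α)
    (hexp : ConcaveOn ℝ X (fun x => Real.exp (-α * f x)))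
    (hG : ∀ y ∈ X, ‖f' y‖ ≤ G)
    (hD : ∀ x ∈ X, ∀ y ∈ X, ‖x - y‖ ≤ D)
    (β : ℝ) (hβ : β = (1 / 2) * min (1 / (4 * G * D)) α) :
    ∀ x ∈ X, ∀ y ∈ X,
      f x ≥ f y + ⟪f' y, x - y⟫ + β / 2 * (⟪f' y, x - y⟫) ^ 2 := by
  intro x hx y hy
  set z := ⟪f' y, x - y⟫
  have hfirst := hexp.exp_neg_mul_sub_le_one_sub_inner hx hy (hdiff y hy)
  have hG0 : 0 ≤ G := (norm_nonneg _).trans (hG y hy)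
  have hD0 : 0 ≤ D := (norm_nonneg _).trans (hD x hx y hy)
  have hz : |z| ≤ G * D := (abs_real_inner_le_norm _ _).trans <|
    mul_le_mul (hG y hy) (hD x hx y hy) (norm_nonneg _) hG0
  have hβα : 2 * β ≤ α := by rw [hβ]; linarith [min_le_right (1 / (4 * G * D)) α]
  have hβz : 2 * β * |z| ≤ 1 / 4 :=
    calc 2 * β * |z| = min (1 / (4 * G * D)) α * |z| := by rw [hβ]; ring
      _ ≤ min (1 / (4 * G * D)) α * (G * D) := by gcongr
      _ ≤ 1 / 4 := by simpa only [mul_assoc] using min_one_div_mul_le (by positivity)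
  rcases (by rw [hβ]; positivity : 0 ≤ β).eq_or_lt with hβ0 | hβ0
  · have := le_of_exp_neg_mul_le_one_sub hα hfirst
    rw [← hβ0]
    linarith
  · have := add_mul_sq_le_of_exp_neg_mul_le_one_sub (by positivity)
      (by nlinarith [neg_abs_le z]) (exp_neg_mul_le_one_sub_of_le hα (by positivity) hβα hfirst)
    linarith

theorem stmt8 {n : ℕ} (X : Set (EuclideanSpace ℝ (Fin n))) (hX : Convex ℝ X)
    (f : EuclideanSpace ℝ (Fin n) → ℝ)
    (f' : EuclideanSpace ℝ (Fin n) → EuclideanSpace ℝ (Fin n))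
    (hdiff : ∀ y ∈ X, HasGradientAt f (f' y) y)
    (α G D : ℝ) (hα : 0 < α)
    (hexp : ConcaveOn ℝ X (fun x => Real.exp (-α * f x)))
    (hG : ∀ y ∈ X, ‖f' y‖ ≤ G)
    (hD : ∀ x ∈ X, ∀ y ∈ X, ‖x - y‖ ≤ D)
    (β : ℝ) (hβ : β = (1 / 2) * min (1 / (4 * G * D)) α) :
    ∀ x ∈ X, ∀ y ∈ X,
      f x ≥ f y + ⟪f' y, x - y⟫ + β / 2 * (⟪f' y, x - y⟫) ^ 2 :=
  stmt8_general X f f' hdiff α G D hα hexp hG hD β hβ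
end

section
/- Let φ > 0, L > 0, and 0 < η₀ ≤ η₁ ≤ ... ≤ η_N. For t ∈ [N] let a_t ∈ ℝⁿ with ‖a_t‖₂ ≤ L, and define A_t = η_t I + φ ∑_{τ≤t} a_τ a_τᵀ. Let (d_t) be delays with m_t = {τ < t : τ + d_τ ≥ t} and d_max^{≤N} = max_{τ ≤ N} min{d_τ, N - τ}. Then ∑_{t=1}^N ‖a_t‖_{A_t⁻¹} (∑_{τ∈m_t} ‖a_τ‖_{A_t⁻¹}) ≤ (2n·d_max^{≤N}/φ)·ln(1 + φL²N/(η₀n)). -/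
/-! Since `A_τ ⪯ A_t` for `τ ≤ t`, every inner term is at most `‖a_τ‖_{A_τ⁻¹}`, and AM-GM bounds
`‖a_t‖_{A_t⁻¹} ‖a_τ‖_{A_τ⁻¹}` by the mean of the squares. Each `m_t` has at most `d_max` elements
and each index lies in at most `d_max` of the sets `m_t`, so the sum is at most
`d_max ∑_t ‖a_t‖²_{A_t⁻¹}`. Replacing `η_t` by `η₀` only enlarges the terms, and for
`V_t = η₀ I + φ ∑_{τ ≤ t} a_τ a_τᵀ` the matrix determinant lemma gives
`φ ‖a_t‖²_{V_t⁻¹} = 1 - det V_{t-1} / det V_t ≤ log det V_t - log det V_{t-1}`, so no truncation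
`min {1, ·}` is needed. Telescoping and AM-GM on the eigenvalues, `det V_N ≤ (tr V_N / n) ^ n`,
give the logarithm. -/

open Matrix Finset

theorem Real.prod_le_sum_div_card_pow {ι : Type*} (s : Finset ι) (z : ι → ℝ)
    (hz : ∀ i ∈ s, 0 ≤ z i) : ∏ i ∈ s, z i ≤ ((∑ i ∈ s, z i) / s.card) ^ s.card := by
  rcases s.eq_empty_or_nonempty with rfl | hs
  · simp
  have hcard : (0 : ℝ) < s.card := by exact_mod_cast hs.card_pos
  have hgm := Real.geom_mean_le_arith_mean s (fun _ => 1) z (fun _ _ => zero_le_one)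
    (by simpa using hcard) hz
  simp only [Real.rpow_one, sum_const, nsmul_eq_mul, mul_one, one_mul] at hgm
  calc ∏ i ∈ s, z i = ((∏ i ∈ s, z i) ^ (s.card : ℝ)⁻¹) ^ s.card :=
        (Real.rpow_inv_natCast_pow (prod_nonneg hz) hs.card_pos.ne').symm
    _ ≤ _ := by gcongr; exact Real.rpow_nonneg (prod_nonneg hz) _

namespace Matrix

variable {ι : Type*} [Fintype ι]

theorem posSemidef_vecMulVec_self (a : ι → ℝ) : (vecMulVec a a).PosSemidef := by
  simpa using posSemidef_vecMulVec_self_star a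

theorem det_sub_smul_vecMulVec [DecidableEq ι] {R : Type*} [CommRing R] {W : Matrix ι ι R}
    (hW : IsUnit W.det) (c : R) (u v : ι → R) :
    (W - c • vecMulVec u v).det = W.det * (1 - c * (v ⬝ᵥ W⁻¹ *ᵥ u)) := by
  have h : W - c • vecMulVec u v
      = W * (1 + replicateCol Unit (-c • W⁻¹ *ᵥ u) * replicateRow Unit v) := by
    rw [Matrix.mul_add, Matrix.mul_one, ← Matrix.mul_assoc, ← replicateCol_mulVec,
      mulVec_smul, mulVec_mulVec, mul_nonsing_inv W hW, one_mulVec, ← vecMulVec_eq,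
      smul_vecMulVec, neg_smul, sub_eq_add_neg]
  rw [h, det_mul, det_one_add_replicateCol_mul_replicateRow, dotProduct_smul, smul_eq_mul,
    neg_mul, sub_eq_add_neg]

theorem PosDef.dotProduct_inv_mulVec_le [DecidableEq ι] {A B : Matrix ι ι ℝ} (hA : A.PosDef)
    (hAB : (B - A).PosSemidef) (x : ι → ℝ) :
    x ⬝ᵥ B⁻¹ *ᵥ x ≤ x ⬝ᵥ A⁻¹ *ᵥ x := by
  have hB : B.PosDef := by simpa using hA.add_posSemidef hAB
  set u := A⁻¹ *ᵥ x
  set v := B⁻¹ *ᵥ x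
  have hAu : A *ᵥ u = x := by
    rw [mulVec_mulVec, mul_nonsing_inv A (isUnit_iff_ne_zero.2 hA.det_pos.ne'), one_mulVec]
  have hBv : B *ᵥ v = x := by
    rw [mulVec_mulVec, mul_nonsing_inv B (isUnit_iff_ne_zero.2 hB.det_pos.ne'), one_mulVec]
  have hsymm : u ⬝ᵥ A *ᵥ v = v ⬝ᵥ A *ᵥ u := by
    rw [dotProduct_mulVec, ← mulVec_transpose, ← conjTranspose_eq_transpose_of_trivial, hA.1.eq,
      dotProduct_comm]
  -- `0 ≤ (u - v)ᵀ A (u - v) ≤ xᵀu - 2 xᵀv + vᵀ B v = xᵀu - xᵀv`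
  have h1 := hA.posSemidef.dotProduct_mulVec_nonneg (u - v)
  have h2 := hAB.dotProduct_mulVec_nonneg v
  simp only [star_trivial, mulVec_sub, sub_mulVec, dotProduct_sub, sub_dotProduct, hAu, hBv]
    at h1 h2
  rw [hsymm, hAu] at h1
  linarith [dotProduct_comm u x, dotProduct_comm v x]

theorem PosDef.dotProduct_inv_mulVec_nonneg [DecidableEq ι] {A : Matrix ι ι ℝ} (hA : A.PosDef)
    (x : ι → ℝ) : 0 ≤ x ⬝ᵥ A⁻¹ *ᵥ x := by
  simpa using hA.inv.posSemidef.dotProduct_mulVec_nonneg x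

theorem PosDef.smul_dotProduct_inv_mulVec_le_log_det_sub [DecidableEq ι] {V : Matrix ι ι ℝ}
    (hV : V.PosDef) {c : ℝ} (hc : 0 ≤ c) (a : ι → ℝ) :
    c * (a ⬝ᵥ (V + c • vecMulVec a a)⁻¹ *ᵥ a) ≤
      Real.log (V + c • vecMulVec a a).det - Real.log V.det := by
  set W := V + c • vecMulVec a a
  have hW : W.PosDef := hV.add_posSemidef ((posSemidef_vecMulVec_self a).smul hc)
  have hdet : V.det = W.det * (1 - c * (a ⬝ᵥ W⁻¹ *ᵥ a)) := by
    rw [← det_sub_smul_vecMulVec (isUnit_iff_ne_zero.2 hW.det_pos.ne'), add_sub_cancel_right]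
  have hr : 0 < 1 - c * (a ⬝ᵥ W⁻¹ *ᵥ a) := by
    have := hV.det_pos
    rw [hdet] at this
    exact pos_of_mul_pos_right this hW.det_pos.le
  rw [hdet, Real.log_mul hW.det_pos.ne' hr.ne']
  linarith [Real.log_le_sub_one_of_pos hr]

theorem PosSemidef.det_le_trace_div_card_pow [DecidableEq ι] {A : Matrix ι ι ℝ}
    (hA : A.PosSemidef) : A.det ≤ (A.trace / Fintype.card ι) ^ Fintype.card ι := by
  rw [hA.isHermitian.det_eq_prod_eigenvalues, hA.isHermitian.trace_eq_sum_eigenvalues]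
  simpa using Real.prod_le_sum_div_card_pow univ _ fun i _ => hA.eigenvalues_nonneg i

end Matrix

section DoubleCounting

variable {ι : Type*} [DecidableEq ι] {s : Finset ι} {m : ι → Finset ι} {D : ℕ}

theorem sum_sum_le_mul_sum_of_card_filter_mem_le (hms : ∀ t ∈ s, m t ⊆ s)
    (hcol : ∀ τ ∈ s, #{t ∈ s | τ ∈ m t} ≤ D) {f : ι → ℝ} (hf : ∀ τ ∈ s, 0 ≤ f τ) :
    ∑ t ∈ s, ∑ τ ∈ m t, f τ ≤ (D : ℝ) * ∑ τ ∈ s, f τ := by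
  rw [sum_comm' (t' := s) (s' := fun τ => {t ∈ s | τ ∈ m t})
    (fun t τ => ⟨fun h => ⟨mem_filter.2 h, hms t h.1 h.2⟩, fun h => mem_filter.1 h.1⟩), mul_sum]
  refine sum_le_sum fun τ hτ => ?_
  rw [sum_const, nsmul_eq_mul]
  exact mul_le_mul_of_nonneg_right (by exact_mod_cast hcol τ hτ) (hf τ hτ)

theorem sum_sqrt_mul_sum_le_mul_sum (hms : ∀ t ∈ s, m t ⊆ s) (hrow : ∀ t ∈ s, #(m t) ≤ D)
    (hcol : ∀ τ ∈ s, #{t ∈ s | τ ∈ m t} ≤ D) {q : ι → ℝ} {x : ι → ι → ℝ}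
    (hq : ∀ t ∈ s, 0 ≤ q t) (hx : ∀ t ∈ s, ∀ τ ∈ m t, x t τ ≤ √(q τ)) :
    ∑ t ∈ s, √(q t) * ∑ τ ∈ m t, x t τ ≤ (D : ℝ) * ∑ t ∈ s, q t := by
  have hrow_sum : ∑ t ∈ s, ∑ _τ ∈ m t, q t / 2 ≤ (D : ℝ) * ∑ t ∈ s, q t / 2 := by
    rw [mul_sum]
    refine sum_le_sum fun t ht => ?_
    rw [sum_const, nsmul_eq_mul]
    exact mul_le_mul_of_nonneg_right (by exact_mod_cast hrow t ht) (by linarith [hq t ht])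
  have hcol_sum := sum_sum_le_mul_sum_of_card_filter_mem_le hms hcol (f := fun τ => q τ / 2)
    fun τ hτ => by linarith [hq τ hτ]
  calc ∑ t ∈ s, √(q t) * ∑ τ ∈ m t, x t τ
      ≤ ∑ t ∈ s, ∑ τ ∈ m t, (q t / 2 + q τ / 2) := by
        refine sum_le_sum fun t ht => ?_
        rw [mul_sum]
        refine sum_le_sum fun τ hτ => ?_
        -- AM-GM: `√(q t) √(q τ) ≤ (q t + q τ) / 2`
        nlinarith [mul_le_mul_of_nonneg_left (hx t ht τ hτ) (Real.sqrt_nonneg (q t)),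
          sq_nonneg (√(q t) - √(q τ)), Real.sq_sqrt (hq t ht), Real.sq_sqrt (hq τ (hms t ht hτ))]
    _ = ∑ t ∈ s, ∑ _τ ∈ m t, q t / 2 + ∑ t ∈ s, ∑ τ ∈ m t, q τ / 2 := by
        simp only [sum_add_distrib]
    _ ≤ (D : ℝ) * ∑ t ∈ s, q t := by
        rw [← sum_div, mul_div_assoc'] at hrow_sum hcol_sum
        linarith

end DoubleCounting

def outstanding (d : ℕ → ℕ) (t : ℕ) : Finset ℕ :=
  {τ ∈ Ico 1 t | t ≤ τ + d τ}

def maxDelay (d : ℕ → ℕ) (N : ℕ) : ℕ :=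
  (Icc 1 N).sup fun τ => min (d τ) (N - τ)

section Delays

variable {d : ℕ → ℕ} {N t τ : ℕ}

theorem lt_of_mem_outstanding (hτ : τ ∈ outstanding d t) : τ < t :=
  (mem_Ico.1 (mem_filter.1 hτ).1).2

theorem outstanding_subset_Icc (ht : t ≤ N) : outstanding d t ⊆ Icc 1 N := by
  intro τ hτ
  simp only [outstanding, mem_filter, mem_Ico] at hτ
  exact mem_Icc.2 ⟨hτ.1.1, by omega⟩

theorem sub_le_maxDelay_of_mem_outstanding (ht : t ≤ N) (hτ : τ ∈ outstanding d t) :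
    t - τ ≤ maxDelay d N := by
  simp only [outstanding, mem_filter, mem_Ico] at hτ
  have := le_sup (f := fun τ => min (d τ) (N - τ)) (mem_Icc.2 ⟨hτ.1.1, hτ.1.2.le.trans ht⟩)
  simp only [maxDelay] at this ⊢
  omega

theorem card_outstanding_le (ht : t ≤ N) : #(outstanding d t) ≤ maxDelay d N := by
  calc #(outstanding d t) ≤ #(Ico (t - maxDelay d N) t) := by
        refine card_le_card fun τ hτ => ?_
        have := sub_le_maxDelay_of_mem_outstanding ht hτ
        simp only [outstanding, mem_filter, mem_Ico] at hτ ⊢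
        omega
    _ ≤ maxDelay d N := by rw [Nat.card_Ico]; omega

theorem card_filter_mem_outstanding_le :
    #{t ∈ Icc 1 N | τ ∈ outstanding d t} ≤ maxDelay d N := by
  calc #{t ∈ Icc 1 N | τ ∈ outstanding d t} ≤ #(Ioc τ (τ + maxDelay d N)) := by
        refine card_le_card fun t ht => ?_
        simp only [mem_filter, mem_Icc] at ht
        have := sub_le_maxDelay_of_mem_outstanding ht.1.2 ht.2
        simp only [outstanding, mem_filter, mem_Ico] at ht
        simp only [mem_Ioc]
        omega
    _ = maxDelay d N := by simp

end Delays

section DesignMatrix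

variable {ι : Type*} [DecidableEq ι]

def designMatrix (η φ : ℝ) (a : ℕ → ι → ℝ) (t : ℕ) : Matrix ι ι ℝ :=
  η • 1 + φ • ∑ τ ∈ Icc 1 t, vecMulVec (a τ) (a τ)

variable {η η' φ : ℝ} {a : ℕ → ι → ℝ}

theorem designMatrix_zero : designMatrix η φ a 0 = η • 1 := by
  simp [designMatrix]

theorem designMatrix_succ (t : ℕ) :
    designMatrix η φ a (t + 1) =
      designMatrix η φ a t + φ • vecMulVec (a (t + 1)) (a (t + 1)) := by
  rw [designMatrix, designMatrix, sum_Icc_succ_top (Nat.le_add_left 1 t), smul_add, add_assoc]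

theorem posDef_designMatrix [Fintype ι] (hη : 0 < η) (hφ : 0 ≤ φ) (t : ℕ) :
    (designMatrix η φ a t).PosDef :=
  (PosDef.one.smul hη).add_posSemidef
    ((posSemidef_sum _ fun τ _ => posSemidef_vecMulVec_self (a τ)).smul hφ)

theorem posSemidef_designMatrix_sub [Fintype ι] (hη : η ≤ η') (hφ : 0 ≤ φ) {s t : ℕ}
    (hst : s ≤ t) : (designMatrix η' φ a t - designMatrix η φ a s).PosSemidef := by
  have hsplit : designMatrix η' φ a t - designMatrix η φ a s =
      (η' - η) • 1 + φ • ∑ τ ∈ Ioc s t, vecMulVec (a τ) (a τ) := by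
    have hIcc : ∀ k, Icc 1 k = Ioc 0 k := fun k => by ext; simp; omega
    rw [designMatrix, designMatrix, hIcc, hIcc, ← sum_Ioc_consecutive _ (Nat.zero_le s) hst,
      smul_add, sub_smul]
    abel
  rw [hsplit]
  exact (PosSemidef.one.smul (sub_nonneg.2 hη)).add
    ((posSemidef_sum _ fun τ _ => posSemidef_vecMulVec_self (a τ)).smul hφ)

theorem dotProduct_inv_designMatrix_le [Fintype ι] (hη : 0 < η) (hηη' : η ≤ η') (hφ : 0 ≤ φ)
    {s t : ℕ} (hst : s ≤ t) (x : ι → ℝ) :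
    x ⬝ᵥ (designMatrix η' φ a t)⁻¹ *ᵥ x ≤ x ⬝ᵥ (designMatrix η φ a s)⁻¹ *ᵥ x :=
  (posDef_designMatrix hη hφ s).dotProduct_inv_mulVec_le
    (posSemidef_designMatrix_sub hηη' hφ hst) x

theorem dotProduct_inv_designMatrix_le_of_monotoneOn [Fintype ι] {η : ℕ → ℝ} {N s t : ℕ}
    (hη0 : 0 < η 0) (hη : MonotoneOn η (Set.Iic N)) (hφ : 0 ≤ φ) (hst : s ≤ t) (ht : t ≤ N)
    (x : ι → ℝ) :
    x ⬝ᵥ (designMatrix (η t) φ a t)⁻¹ *ᵥ x ≤ x ⬝ᵥ (designMatrix (η s) φ a s)⁻¹ *ᵥ x :=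
  dotProduct_inv_designMatrix_le (hη0.trans_le (hη (Nat.zero_le N) (hst.trans ht) (Nat.zero_le s)))
    (hη (hst.trans ht) ht hst) hφ hst x

theorem trace_designMatrix [Fintype ι] (t : ℕ) :
    (designMatrix η φ a t).trace = η * Fintype.card ι + φ * ∑ τ ∈ Icc 1 t, a τ ⬝ᵥ a τ := by
  simp [designMatrix, trace_sum, trace_vecMulVec]

theorem sum_dotProduct_inv_designMatrix_le_log_det [Fintype ι] (hη : 0 < η) (hφ : 0 ≤ φ)
    (N : ℕ) :
    φ * ∑ t ∈ Icc 1 N, a t ⬝ᵥ (designMatrix η φ a t)⁻¹ *ᵥ a t ≤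
      Real.log (designMatrix η φ a N).det - Real.log (designMatrix η φ a 0).det := by
  induction N with
  | zero => simp
  | succ N ih =>
    rw [sum_Icc_succ_top (Nat.le_add_left 1 N), mul_add, designMatrix_succ N]
    linarith [(posDef_designMatrix (a := a) hη hφ N).smul_dotProduct_inv_mulVec_le_log_det_sub hφ
      (a (N + 1))]

theorem log_det_designMatrix_sub_le [Fintype ι] [Nonempty ι] (hη : 0 < η) (hφ : 0 ≤ φ) {K : ℝ}
    (hK0 : 0 ≤ K) {N : ℕ} (hK : ∀ τ ∈ Icc 1 N, a τ ⬝ᵥ a τ ≤ K) :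
    Real.log (designMatrix η φ a N).det - Real.log (designMatrix η φ a 0).det ≤
      Fintype.card ι * Real.log (1 + φ * K * N / (η * Fintype.card ι)) := by
  set n := Fintype.card ι
  have hn : (0 : ℝ) < n := by exact_mod_cast Fintype.card_pos
  have htrace : (designMatrix η φ a N).trace / n ≤ η * (1 + φ * K * N / (η * n)) := by
    rw [trace_designMatrix, div_le_iff₀ hn]
    have : ∑ τ ∈ Icc 1 N, a τ ⬝ᵥ a τ ≤ N * K := by simpa using sum_le_sum hK
    field_simp
    nlinarith
  have hD := posDef_designMatrix (a := a) hη hφ N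
  have hdet : Real.log (designMatrix η φ a N).det ≤
      n * Real.log ((designMatrix η φ a N).trace / n) := by
    rw [← Real.log_pow]
    exact Real.log_le_log hD.det_pos hD.posSemidef.det_le_trace_div_card_pow
  calc Real.log (designMatrix η φ a N).det - Real.log (designMatrix η φ a 0).det
      ≤ n * Real.log ((designMatrix η φ a N).trace / n) - n * Real.log η := by
        rw [designMatrix_zero, det_smul, det_one, mul_one, Real.log_pow]
        linarith
    _ ≤ n * Real.log (η * (1 + φ * K * N / (η * n))) - n * Real.log η := by
        gcongr
        exact div_pos hD.trace_pos hn
    _ = n * Real.log (1 + φ * K * N / (η * n)) := by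
        rw [Real.log_mul hη.ne' (by positivity)]; ring

theorem sum_dotProduct_inv_designMatrix_le [Fintype ι] [Nonempty ι] (hη : 0 < η) (hφ : 0 < φ)
    {K : ℝ} (hK0 : 0 ≤ K) {N : ℕ} (hK : ∀ τ ∈ Icc 1 N, a τ ⬝ᵥ a τ ≤ K) :
    ∑ t ∈ Icc 1 N, a t ⬝ᵥ (designMatrix η φ a t)⁻¹ *ᵥ a t ≤
      Fintype.card ι / φ * Real.log (1 + φ * K * N / (η * Fintype.card ι)) := by
  rw [div_mul_eq_mul_div, le_div_iff₀ hφ, mul_comm]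
  exact (sum_dotProduct_inv_designMatrix_le_log_det hη hφ.le N).trans
    (log_det_designMatrix_sub_le hη hφ.le hK0 hK)

theorem sum_dotProduct_inv_designMatrix_le_of_monotoneOn [Fintype ι] [Nonempty ι] {η : ℕ → ℝ}
    {N : ℕ} (hη0 : 0 < η 0) (hη : MonotoneOn η (Set.Iic N)) (hφ : 0 < φ) {K : ℝ} (hK0 : 0 ≤ K)
    (hK : ∀ τ ∈ Icc 1 N, a τ ⬝ᵥ a τ ≤ K) :
    ∑ t ∈ Icc 1 N, a t ⬝ᵥ (designMatrix (η t) φ a t)⁻¹ *ᵥ a t ≤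
      Fintype.card ι / φ * Real.log (1 + φ * K * N / (η 0 * Fintype.card ι)) := by
  refine (sum_le_sum fun t ht => ?_).trans (sum_dotProduct_inv_designMatrix_le hη0 hφ hK0 hK)
  exact dotProduct_inv_designMatrix_le hη0 (hη (Nat.zero_le N) (mem_Icc.1 ht).2 (Nat.zero_le t))
    hφ.le le_rfl (a t)

end DesignMatrix

theorem stmt10_general {n : ℕ} (hn : 0 < n) (N : ℕ) (φ L : ℝ) (hφ : 0 < φ)
    (η : ℕ → ℝ) (hη0 : 0 < η 0) (hηmono : ∀ t, t < N → η t ≤ η (t + 1))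
    (a : ℕ → Fin n → ℝ)
    (ha : ∀ t ∈ Finset.Icc 1 N, Real.sqrt (a t ⬝ᵥ a t) ≤ L)
    (d : ℕ → ℕ) (m : ℕ → Finset ℕ)
    (hm : ∀ t, m t = (Finset.Ico 1 t).filter (fun τ => t ≤ τ + d τ))
    (A : ℕ → Matrix (Fin n) (Fin n) ℝ)
    (hA : ∀ t, A t = η t • (1 : Matrix (Fin n) (Fin n) ℝ)
        + φ • ∑ τ ∈ Finset.Icc 1 t, Matrix.vecMulVec (a τ) (a τ))
    (dmax : ℕ) (hdmax : dmax = (Finset.Icc 1 N).sup (fun τ => min (d τ) (N - τ))) :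
    ∑ t ∈ Finset.Icc 1 N,
        Real.sqrt (a t ⬝ᵥ (A t)⁻¹.mulVec (a t)) *
          (∑ τ ∈ m t, Real.sqrt (a τ ⬝ᵥ (A t)⁻¹.mulVec (a τ))) ≤
      2 * n * dmax / φ * Real.log (1 + φ * L ^ 2 * N / (η 0 * n)) := by
  obtain rfl : m = outstanding d := funext hm
  obtain rfl : A = fun t => designMatrix (η t) φ a t := funext hA
  obtain rfl : dmax = maxDelay d N := hdmax
  have : Nonempty (Fin n) := Fin.pos_iff_nonempty.1 hn
  have hη : MonotoneOn η (Set.Iic N) := monotoneOn_of_le_add_one Set.ordConnected_Iic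
    fun t _ _ ht => hηmono t (Nat.lt_of_succ_le ht)
  have hq : ∀ t ∈ Icc 1 N, 0 ≤ a t ⬝ᵥ (designMatrix (η t) φ a t)⁻¹ *ᵥ a t := fun t ht =>
    (posDef_designMatrix (hη0.trans_le (hη (Nat.zero_le N) (mem_Icc.1 ht).2 (Nat.zero_le t)))
      hφ.le t).dotProduct_inv_mulVec_nonneg (a t)
  have hA_mono : ∀ t ∈ Icc 1 N, ∀ τ ∈ outstanding d t,
      √(a τ ⬝ᵥ (designMatrix (η t) φ a t)⁻¹ *ᵥ a τ) ≤
        √(a τ ⬝ᵥ (designMatrix (η τ) φ a τ)⁻¹ *ᵥ a τ) := fun t ht τ hτ =>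
    Real.sqrt_le_sqrt <| dotProduct_inv_designMatrix_le_of_monotoneOn hη0 hη hφ.le
      (lt_of_mem_outstanding hτ).le (mem_Icc.1 ht).2 (a τ)
  calc _ ≤ (maxDelay d N : ℝ) * ∑ t ∈ Icc 1 N, a t ⬝ᵥ (designMatrix (η t) φ a t)⁻¹ *ᵥ a t :=
        sum_sqrt_mul_sum_le_mul_sum (fun t ht => outstanding_subset_Icc (mem_Icc.1 ht).2)
          (fun t ht => card_outstanding_le (mem_Icc.1 ht).2)
          (fun _ _ => card_filter_mem_outstanding_le) hq hA_mono
    _ ≤ (maxDelay d N : ℝ) * (n / φ * Real.log (1 + φ * L ^ 2 * N / (η 0 * n))) := by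
        gcongr
        simpa using sum_dotProduct_inv_designMatrix_le_of_monotoneOn hη0 hη hφ (sq_nonneg L)
          fun t ht => (Real.sqrt_le_iff.1 (ha t ht)).2
    _ ≤ 2 * n * maxDelay d N / φ * Real.log (1 + φ * L ^ 2 * N / (η 0 * n)) := by
        have : 0 ≤ n * maxDelay d N / φ * Real.log (1 + φ * L ^ 2 * N / (η 0 * n)) :=
          mul_nonneg (by positivity) (Real.log_nonneg (le_add_of_nonneg_right (by positivity)))
        linear_combination this

theorem stmt10 {n : ℕ} (hn : 0 < n) (N : ℕ) (φ L : ℝ) (hφ : 0 < φ) (hL : 0 < L)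
    (η : ℕ → ℝ) (hη0 : 0 < η 0) (hηmono : ∀ t, t < N → η t ≤ η (t + 1))
    (a : ℕ → Fin n → ℝ)
    (ha : ∀ t ∈ Finset.Icc 1 N, Real.sqrt (a t ⬝ᵥ a t) ≤ L)
    (d : ℕ → ℕ) (m : ℕ → Finset ℕ)
    (hm : ∀ t, m t = (Finset.Ico 1 t).filter (fun τ => t ≤ τ + d τ))
    (A : ℕ → Matrix (Fin n) (Fin n) ℝ)
    (hA : ∀ t, A t = η t • (1 : Matrix (Fin n) (Fin n) ℝ)
        + φ • ∑ τ ∈ Finset.Icc 1 t, Matrix.vecMulVec (a τ) (a τ))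
    (dmax : ℕ) (hdmax : dmax = (Finset.Icc 1 N).sup (fun τ => min (d τ) (N - τ))) :
    ∑ t ∈ Finset.Icc 1 N,
        Real.sqrt (a t ⬝ᵥ (A t)⁻¹.mulVec (a t)) *
          (∑ τ ∈ m t, Real.sqrt (a τ ⬝ᵥ (A t)⁻¹.mulVec (a τ))) ≤
      2 * n * dmax / φ * Real.log (1 + φ * L ^ 2 * N / (η 0 * n)) :=
  stmt10_general hn N φ L hφ η hη0 hηmono a ha d m hm A hA dmax hdmax
end

section
/- Let T ≥ 2 and let (o_t)_{t=1}^{T+1} be a nondecreasing sequence of subsets of ℕ with o_1 = ∅, o_{t+1} ⊆ [t], and |o_{T+1}| = T. Then ∑_{t=1}^T (|o_{t+1}| - |o_t|)/t ≤ 1 + ln T. -/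
/-!
Use the potential `φ 0 = 0`, `φ n = 1 + log n` for `n ≥ 1` (`logPotential`). An increment from `a`
to `b ≤ t` costs `(b - a) / t ≤ (b - a) / b = 1 - a / b ≤ φ b - φ a`, the last step being
`log x ≤ x - 1` at `x = a / b`. The sum therefore telescopes to at most `φ |o_{T+1}| ≤ φ T`,
and `φ` is nonnegative and monotone.
-/

open Real Finset

noncomputable def logPotential (n : ℕ) : ℝ := if n = 0 then 0 else 1 + log n

lemma logPotential_nonneg (n : ℕ) : 0 ≤ logPotential n := by
  unfold logPotential
  split_ifs with hn
  · rfl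
  · have : (1 : ℝ) ≤ n := by exact_mod_cast Nat.one_le_iff_ne_zero.mpr hn
    linarith [log_nonneg this]

lemma logPotential_mono : Monotone logPotential := by
  intro a b hab
  rcases Nat.eq_zero_or_pos a with rfl | ha
  · exact (if_pos rfl).trans_le (logPotential_nonneg b)
  · have ha' : (0 : ℝ) < a := by exact_mod_cast ha
    simp only [logPotential, if_neg ha.ne', if_neg (ha.trans_le hab).ne']
    gcongr

lemma one_sub_div_le_logPotential_sub {a b : ℕ} (hab : a ≤ b) (hb : 0 < b) :
    1 - (a : ℝ) / b ≤ logPotential b - logPotential a := by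
  have hb' : (0 : ℝ) < b := by exact_mod_cast hb
  rcases Nat.eq_zero_or_pos a with rfl | ha
  · have : 0 ≤ log b := log_nonneg (by exact_mod_cast hb)
    simp only [logPotential, if_neg hb.ne', ↓reduceIte, CharP.cast_eq_zero, zero_div]
    linarith
  · have ha' : (0 : ℝ) < a := by exact_mod_cast ha
    have hlog : log ((a : ℝ) / b) ≤ a / b - 1 := log_le_sub_one_of_pos (by positivity)
    rw [log_div ha'.ne' hb'.ne'] at hlog
    simp only [logPotential, if_neg ha.ne', if_neg hb.ne']
    linarith

lemma sub_div_le_logPotential_sub {a b t : ℕ} (hab : a ≤ b) (hbt : b ≤ t) :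
    ((b : ℝ) - a) / t ≤ logPotential b - logPotential a := by
  rcases Nat.eq_zero_or_pos b with rfl | hb
  · obtain rfl : a = 0 := Nat.le_zero.mp hab
    simp
  have hb' : (0 : ℝ) < b := by exact_mod_cast hb
  calc ((b : ℝ) - a) / t ≤ ((b : ℝ) - a) / b := by
        gcongr
        exact sub_nonneg.mpr (by exact_mod_cast hab)
    _ = 1 - (a : ℝ) / b := by field_simp
    _ ≤ logPotential b - logPotential a := one_sub_div_le_logPotential_sub hab hb

theorem sum_sub_div_le_one_add_log (T : ℕ) (c : ℕ → ℕ)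
    (hmono : ∀ t ∈ Icc 1 T, c t ≤ c (t + 1)) (hle : ∀ t ∈ Icc 1 T, c (t + 1) ≤ t) :
    ∑ t ∈ Icc 1 T, ((c (t + 1) : ℝ) - c t) / t ≤ 1 + log T := by
  rcases Nat.eq_zero_or_pos T with rfl | hT
  · simp
  calc ∑ t ∈ Icc 1 T, ((c (t + 1) : ℝ) - c t) / t
      ≤ ∑ t ∈ Icc 1 T, (logPotential (c (t + 1)) - logPotential (c t)) :=
        sum_le_sum fun t ht => sub_div_le_logPotential_sub (hmono t ht) (hle t ht)
    _ = logPotential (c (T + 1)) - logPotential (c 1) := sum_Icc_sub hT fun t => logPotential (c t)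
    _ ≤ logPotential T := by
        have := logPotential_mono (hle T (right_mem_Icc.mpr hT))
        linarith [logPotential_nonneg (c 1)]
    _ = 1 + log T := if_neg hT.ne'

theorem stmt14_general (T : ℕ) (o : ℕ → Finset ℕ)
    (hmono : ∀ t ∈ Finset.Icc 1 T, o t ⊆ o (t + 1))
    (hsub : ∀ t ∈ Finset.Icc 1 T, o (t + 1) ⊆ Finset.Icc 1 t) :
    ∑ t ∈ Finset.Icc 1 T, (((o (t + 1)).card : ℝ) - ((o t).card : ℝ)) / t ≤
      1 + Real.log T :=
  sum_sub_div_le_one_add_log T (fun t => (o t).card)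
    (fun t ht => card_le_card (hmono t ht))
    (fun t ht => (card_le_card (hsub t ht)).trans_eq (Nat.card_Icc 1 t))

theorem stmt14 (T : ℕ) (hT : 2 ≤ T) (o : ℕ → Finset ℕ)
    (ho1 : o 1 = ∅)
    (hmono : ∀ t ∈ Finset.Icc 1 T, o t ⊆ o (t + 1))
    (hsub : ∀ t ∈ Finset.Icc 1 T, o (t + 1) ⊆ Finset.Icc 1 t)
    (hcard : (o (T + 1)).card = T) :
    ∑ t ∈ Finset.Icc 1 T, (((o (t + 1)).card : ℝ) - ((o t).card : ℝ)) / t ≤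
      1 + Real.log T :=
  stmt14_general T o hmono hsub
end

section
/- Let A be a convex subset of ℝⁿ, ψ a differentiable convex function, D_ψ(x,y) = ψ(x) - ψ(y) - ⟨∇ψ(y), x - y⟩ the Bregman divergence, g ∈ ℝⁿ, x₁ ∈ A, and x₂ = argmin_{x∈A}(⟨g,x⟩ + D_ψ(x, x₁)). Then for any u ∈ A, ⟨x₂ - u, g⟩ ≤ D_ψ(u, x₁) - D_ψ(u, x₂) - D_ψ(x₂, x₁). -/
/-!
The point x₂ minimises `x ↦ ⟪g, x⟫ + D x x₁` over the convex set `A`, whose gradient at x₂ is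
`g + ∇ψ x₂ - ∇ψ x₁`; first-order optimality gives `0 ≤ ⟪g + ∇ψ x₂ - ∇ψ x₁, u - x₂⟫`, and the
three-point identity `D u x₁ - D u x₂ - D x₂ x₁ = ⟪∇ψ x₂ - ∇ψ x₁, u - x₂⟫` turns this into the claim.
-/

open RealInnerProductSpace

section Bregman

variable {F : Type*} [NormedAddCommGroup F] [InnerProductSpace ℝ F]

def bregmanDiv (ψ : F → ℝ) (ψ' : F → F) (x y : F) : ℝ :=
  ψ x - ψ y - ⟪ψ' y, x - y⟫

theorem bregmanDiv_three_point (ψ : F → ℝ) (ψ' : F → F) (u x y : F) :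
    bregmanDiv ψ ψ' u y - bregmanDiv ψ ψ' u x - bregmanDiv ψ ψ' x y = ⟪ψ' x - ψ' y, u - x⟫ := by
  simp only [bregmanDiv, inner_sub_left, inner_sub_right]
  ring

variable [CompleteSpace F]

theorem hasGradientAt_inner_add_bregmanDiv {ψ : F → ℝ} {ψ' : F → F} {x : F}
    (hψ : HasGradientAt ψ (ψ' x) x) (g y : F) :
    HasGradientAt (fun z => ⟪g, z⟫ + bregmanDiv ψ ψ' z y) (g + (ψ' x - ψ' y)) x := by
  have hinner (v : F) : HasFDerivAt (fun z => ⟪v, z⟫) (InnerProductSpace.toDual ℝ F v) x :=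
    (InnerProductSpace.toDual ℝ F v).hasFDerivAt
  rw [hasGradientAt_iff_hasFDerivAt, map_add, map_sub]
  refine ((hinner g).add ((hψ.hasFDerivAt.sub_const (ψ y)).sub
    ((hinner (ψ' y)).sub_const ⟪ψ' y, y⟫))).congr_of_eventuallyEq (.of_forall fun z => ?_)
  simp only [bregmanDiv, inner_sub_right, Pi.add_apply, Pi.sub_apply]

theorem inner_sub_nonneg_of_isMinOn {f : F → ℝ} {f' : F} {s : Set F} {a u : F}
    (hs : Convex ℝ s) (ha : a ∈ s) (hmin : IsMinOn f s a) (hf : HasGradientAt f f' a)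
    (hu : u ∈ s) : 0 ≤ ⟪f', u - a⟫ :=
  hmin.localize.hasFDerivWithinAt_nonneg hf.hasFDerivAt.hasFDerivWithinAt
    (sub_mem_posTangentConeAt_of_segment_subset (hs.segment_subset ha hu))

end Bregman

theorem stmt16_general {n : ℕ} (A : Set (EuclideanSpace ℝ (Fin n))) (hA : Convex ℝ A)
    (ψ : EuclideanSpace ℝ (Fin n) → ℝ)
    (ψ' : EuclideanSpace ℝ (Fin n) → EuclideanSpace ℝ (Fin n))
    (hψdiff : ∀ x, HasGradientAt ψ (ψ' x) x)
    (D : EuclideanSpace ℝ (Fin n) → EuclideanSpace ℝ (Fin n) → ℝ)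
    (hD : ∀ x y, D x y = ψ x - ψ y - ⟪ψ' y, x - y⟫)
    (g x₁ x₂ : EuclideanSpace ℝ (Fin n))
    (hx₂ : x₂ ∈ A)
    (hmin : ∀ x ∈ A, ⟪g, x₂⟫ + D x₂ x₁ ≤ ⟪g, x⟫ + D x x₁) :
    ∀ u ∈ A, ⟪x₂ - u, g⟫ ≤ D u x₁ - D u x₂ - D x₂ x₁ := by
  obtain rfl : D = bregmanDiv ψ ψ' := funext₂ hD
  intro u hu
  have hopt := inner_sub_nonneg_of_isMinOn hA hx₂ (isMinOn_iff.mpr hmin)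
    (hasGradientAt_inner_add_bregmanDiv (hψdiff x₂) g x₁) hu
  rw [bregmanDiv_three_point, ← neg_sub u x₂, inner_neg_left, real_inner_comm]
  rw [inner_add_left] at hopt
  linarith

theorem stmt16 {n : ℕ} (A : Set (EuclideanSpace ℝ (Fin n))) (hA : Convex ℝ A)
    (ψ : EuclideanSpace ℝ (Fin n) → ℝ)
    (ψ' : EuclideanSpace ℝ (Fin n) → EuclideanSpace ℝ (Fin n))
    (hψconv : ConvexOn ℝ Set.univ ψ)
    (hψdiff : ∀ x, HasGradientAt ψ (ψ' x) x)
    (D : EuclideanSpace ℝ (Fin n) → EuclideanSpace ℝ (Fin n) → ℝ)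
    (hD : ∀ x y, D x y = ψ x - ψ y - ⟪ψ' y, x - y⟫)
    (g x₁ x₂ : EuclideanSpace ℝ (Fin n))
    (hx₁ : x₁ ∈ A) (hx₂ : x₂ ∈ A)
    (hmin : ∀ x ∈ A, ⟪g, x₂⟫ + D x₂ x₁ ≤ ⟪g, x⟫ + D x x₁) :
    ∀ u ∈ A, ⟪x₂ - u, g⟫ ≤ D u x₁ - D u x₂ - D x₂ x₁ :=
  stmt16_general A hA ψ ψ' hψdiff D hD g x₁ x₂ hx₂ hmin
end

section
/- In the setting of Algorithm 1 (Delayed FTRL for strongly convex functions): let λ > 0, x_1 ∈ X, and for t ≥ 2 let x_t minimize ∑_{τ∈o_t}⟨g_τ,x⟩ + (λ/2)∑_{s<t}‖x-x_s‖₂² over X, and let x_t^⋆ minimize ∑_{τ<t}⟨g_τ,x⟩ + (λ/2)∑_{s<t}‖x-x_s‖₂² over X (with x_1^⋆ = x_1). If ‖g_τ‖₂ ≤ G for all τ, then for every t ≥ 2, ‖x_t^⋆ - x_t‖₂ ≤ G|m_t|/(λ(t-1)), where m_t = [t-1] \ o_t. -/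
/-!
Both iterates minimize, over `X`, a linear term plus the same regularizer
`(λ/2) ∑_{s<t} ‖x - x_s‖²`, which is `λ(t-1)`-strongly convex. At a minimizer `x` of an
`m`-strongly convex function `F` one has the quadratic growth `F y - F x ≥ (m/2)‖y - x‖²`;
adding the two growth inequalities for the objectives with linear parts `w₁`, `w₂` gives
`m‖x₁ - x₂‖² ≤ ⟪w₂ - w₁, x₁ - x₂⟫`, hence `m‖x₁ - x₂‖ ≤ ‖w₁ - w₂‖`. Here `w₁ - w₂` is the sum
of the missing gradients, of norm at most `G|m_t|`.
-/

open RealInnerProductSpace Filter Topology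

section

variable {E : Type*} [NormedAddCommGroup E] [InnerProductSpace ℝ E] {s : Set E} {m : ℝ}
  {f : E → ℝ}

lemma StrongConvexOn.mul_sq_norm_sub_le_sub_of_isMinOn (hf : StrongConvexOn s m f) {x y : E}
    (hmin : IsMinOn f s x) (hx : x ∈ s) (hy : y ∈ s) :
    m / 2 * ‖y - x‖ ^ 2 ≤ f y - f x := by
  have hgap : ∀ θ ∈ Set.Ioo (0 : ℝ) 1, (1 - θ) * (m / 2 * ‖y - x‖ ^ 2) ≤ f y - f x := by
    rintro θ ⟨hθ0, hθ1⟩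
    -- compare `f x` with `f` at `(1 - θ) • x + θ • y`, then let `θ → 0⁺`
    have hconv := hf.2 hx hy (sub_nonneg.2 hθ1.le) hθ0.le (sub_add_cancel 1 θ)
    have hle := hmin (hf.1 hx hy (sub_nonneg.2 hθ1.le) hθ0.le (sub_add_cancel 1 θ))
    rw [norm_sub_rev] at hconv
    simp only [smul_eq_mul] at hconv
    have hscaled : θ * ((1 - θ) * (m / 2 * ‖y - x‖ ^ 2)) ≤ θ * (f y - f x) := by
      nlinarith [hle.out]
    exact le_of_mul_le_mul_left hscaled hθ0
  have hlim : Tendsto (fun θ : ℝ => (1 - θ) * (m / 2 * ‖y - x‖ ^ 2)) (𝓝[>] 0)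
      (𝓝 (m / 2 * ‖y - x‖ ^ 2)) := by
    have hcont : Continuous fun θ : ℝ => (1 - θ) * (m / 2 * ‖y - x‖ ^ 2) := by fun_prop
    simpa using (hcont.tendsto 0).mono_left nhdsWithin_le_nhds
  exact le_of_tendsto hlim (Filter.eventually_of_mem (Ioo_mem_nhdsGT one_pos) hgap)

lemma StrongConvexOn.inner_add (hf : StrongConvexOn s m f) (w : E) :
    StrongConvexOn s m fun x => ⟪w, x⟫ + f x := by
  have hlin : UniformConvexOn s 0 fun x => ⟪w, x⟫ :=
    uniformConvexOn_zero.2 ((innerSL ℝ w).toLinearMap.convexOn hf.1)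
  simpa using! hlin.add hf

lemma StrongConvexOn.mul_norm_sub_le_of_isMinOn_inner_add (hf : StrongConvexOn s m f)
    {w₁ w₂ x₁ x₂ : E} (h₁ : IsMinOn (fun x => ⟪w₁, x⟫ + f x) s x₁)
    (h₂ : IsMinOn (fun x => ⟪w₂, x⟫ + f x) s x₂) (hx₁ : x₁ ∈ s) (hx₂ : x₂ ∈ s) :
    m * ‖x₁ - x₂‖ ≤ ‖w₁ - w₂‖ := by
  have growth₁ := (hf.inner_add w₁).mul_sq_norm_sub_le_sub_of_isMinOn h₁ hx₁ hx₂
  have growth₂ := (hf.inner_add w₂).mul_sq_norm_sub_le_sub_of_isMinOn h₂ hx₂ hx₁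
  have hmono : m * ‖x₁ - x₂‖ ^ 2 ≤ ⟪w₂ - w₁, x₁ - x₂⟫ := by
    rw [norm_sub_rev] at growth₁
    simp only [inner_sub_left, inner_sub_right] at growth₁ growth₂ ⊢
    linarith
  have hcs : ⟪w₂ - w₁, x₁ - x₂⟫ ≤ ‖w₁ - w₂‖ * ‖x₁ - x₂‖ := by
    rw [norm_sub_rev w₁]
    exact real_inner_le_norm _ _
  rcases (norm_nonneg (x₁ - x₂)).eq_or_lt with h | h
  · rw [← h, mul_zero]
    exact norm_nonneg _
  · exact le_of_mul_le_mul_right (by nlinarith) h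

lemma strongConvexOn_mul_sum_sq_norm_sub {ι : Type*} (hs : Convex ℝ s) (lam : ℝ)
    (S : Finset ι) (a : ι → E) :
    StrongConvexOn s (lam * S.card) fun x => lam / 2 * ∑ i ∈ S, ‖x - a i‖ ^ 2 := by
  have hsplit : (fun x => lam / 2 * ∑ i ∈ S, ‖x - a i‖ ^ 2 - lam * S.card / 2 * ‖x‖ ^ 2) =
      fun x => ⟪-(lam • ∑ i ∈ S, a i), x⟫ + lam / 2 * ∑ i ∈ S, ‖a i‖ ^ 2 := by
    funext x
    simp only [norm_sub_sq_real, Finset.sum_add_distrib, Finset.sum_sub_distrib,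
      Finset.sum_const, nsmul_eq_mul, real_inner_comm x, inner_neg_right, real_inner_smul_right,
      inner_sum, ← Finset.mul_sum]
    ring
  rw [strongConvexOn_iff_convex, hsplit]
  exact ((innerSL ℝ _).toLinearMap.convexOn hs).add_const _

end

theorem stmt18_general {n : ℕ} (X : Set (EuclideanSpace ℝ (Fin n)))
    (hXconv : Convex ℝ X)
    (lam G : ℝ) (hlam : 0 < lam)
    (g : ℕ → EuclideanSpace ℝ (Fin n)) (hG : ∀ τ, ‖g τ‖ ≤ G)
    (t : ℕ) (ht : 2 ≤ t)
    (ot : Finset ℕ) (hot : ot ⊆ Finset.Ico 1 t)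
    (xs : ℕ → EuclideanSpace ℝ (Fin n))
    (xt xst : EuclideanSpace ℝ (Fin n))
    (hxtmem : xt ∈ X)
    (hxt : ∀ y ∈ X,
      (∑ τ ∈ ot, ⟪g τ, xt⟫) + lam / 2 * ∑ s ∈ Finset.Ico 1 t, ‖xt - xs s‖ ^ 2 ≤
        (∑ τ ∈ ot, ⟪g τ, y⟫) + lam / 2 * ∑ s ∈ Finset.Ico 1 t, ‖y - xs s‖ ^ 2)
    (hxstmem : xst ∈ X)
    (hxst : ∀ y ∈ X,
      (∑ τ ∈ Finset.Ico 1 t, ⟪g τ, xst⟫)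
          + lam / 2 * ∑ s ∈ Finset.Ico 1 t, ‖xst - xs s‖ ^ 2 ≤
        (∑ τ ∈ Finset.Ico 1 t, ⟪g τ, y⟫)
          + lam / 2 * ∑ s ∈ Finset.Ico 1 t, ‖y - xs s‖ ^ 2) :
    ‖xst - xt‖ ≤ G * ((Finset.Ico 1 t \ ot).card : ℝ) / (lam * ((t : ℝ) - 1)) := by
  set S := Finset.Ico 1 t
  have hcard : (S.card : ℝ) = t - 1 := by
    rw [Nat.card_Ico, Nat.cast_sub (by omega), Nat.cast_one]
  have hmin_obs : IsMinOn (fun x => ⟪∑ τ ∈ ot, g τ, x⟫ + lam / 2 * ∑ s ∈ S, ‖x - xs s‖ ^ 2)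
      X xt := isMinOn_iff.2 fun y hy => by simpa only [sum_inner] using hxt y hy
  have hmin_full : IsMinOn (fun x => ⟪∑ τ ∈ S, g τ, x⟫ + lam / 2 * ∑ s ∈ S, ‖x - xs s‖ ^ 2)
      X xst := isMinOn_iff.2 fun y hy => by simpa only [sum_inner] using hxst y hy
  have hstab := (strongConvexOn_mul_sum_sq_norm_sub hXconv lam S xs)
    |>.mul_norm_sub_le_of_isMinOn_inner_add hmin_full hmin_obs hxstmem hxtmem
  have hmissing : ‖∑ τ ∈ S, g τ - ∑ τ ∈ ot, g τ‖ ≤ G * (S \ ot).card := by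
    rw [← Finset.sum_sdiff_eq_sub hot]
    simpa [mul_comm G] using norm_sum_le_of_le (S \ ot) fun τ _ => hG τ
  have ht1 : (0 : ℝ) < t - 1 := by
    have : (2 : ℝ) ≤ t := by exact_mod_cast ht
    linarith
  rw [le_div_iff₀ (mul_pos hlam ht1), ← hcard, mul_comm]
  exact hstab.trans hmissing

theorem stmt18 {n : ℕ} (X : Set (EuclideanSpace ℝ (Fin n)))
    (hXne : X.Nonempty) (hXc : IsClosed X) (hXconv : Convex ℝ X)
    (lam G : ℝ) (hlam : 0 < lam)
    (g : ℕ → EuclideanSpace ℝ (Fin n)) (hG : ∀ τ, ‖g τ‖ ≤ G)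
    (t : ℕ) (ht : 2 ≤ t)
    (ot : Finset ℕ) (hot : ot ⊆ Finset.Ico 1 t)
    (xs : ℕ → EuclideanSpace ℝ (Fin n))
    (xt xst : EuclideanSpace ℝ (Fin n))
    (hxtmem : xt ∈ X)
    (hxt : ∀ y ∈ X,
      (∑ τ ∈ ot, ⟪g τ, xt⟫) + lam / 2 * ∑ s ∈ Finset.Ico 1 t, ‖xt - xs s‖ ^ 2 ≤
        (∑ τ ∈ ot, ⟪g τ, y⟫) + lam / 2 * ∑ s ∈ Finset.Ico 1 t, ‖y - xs s‖ ^ 2)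
    (hxstmem : xst ∈ X)
    (hxst : ∀ y ∈ X,
      (∑ τ ∈ Finset.Ico 1 t, ⟪g τ, xst⟫)
          + lam / 2 * ∑ s ∈ Finset.Ico 1 t, ‖xst - xs s‖ ^ 2 ≤
        (∑ τ ∈ Finset.Ico 1 t, ⟪g τ, y⟫)
          + lam / 2 * ∑ s ∈ Finset.Ico 1 t, ‖y - xs s‖ ^ 2) :
    ‖xst - xt‖ ≤ G * ((Finset.Ico 1 t \ ot).card : ℝ) / (lam * ((t : ℝ) - 1)) :=
  stmt18_general X hXconv lam G hlam g hG t ht ot hot xs xt xst hxtmem hxt hxstmem hxst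
end
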